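/- Let G be a finite simple graph, R a triconnected region of G, and 𝒯 a G-tangle of order 4 such that {(Y,S,Z) ∈ 𝒯 : |S| < 3} = {(Y,S,Z) : (Y,S,Z) is a separation of G of order < 3 with R ⊆ S ∪ Z}. Then the set of all separations (Y',S',Z') of the torso G⟦R⟧ of order < 4 for which there exists (Y,S,Z) ∈ 𝒯 with Y' = Y ∩ R, S' = S ∩ R and Z' = Z ∩ R is a G⟦R⟧-tangle of order 4. -/

import Mathlib

/-!
Since `R` is a maximal 2-inseparable set, every component `C` of `G - R` has at most two
attachment vertices: for three of them, a fan from a suitable `v ∈ C` would make `R ∪ {v}`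
2-inseparable. So the shadow of a vertex `x` on `R` (`x` itself, or the attachments of its
component) is a clique of the torso with at most two vertices, and so is the union of the
shadows of the two ends of an edge.

A separation `(Y', S', Z')` of the torso lifts to `G` by putting a vertex outside `R` on the far
side iff its shadow meets `Z'`. Since `𝒯` contains every separation of order `≤ 2` that cuts off
a component of `G - R`, any member of `𝒯` can be cleaned, by moving the components that do not
attach to its far side across, until its far side is contained in that of the lift; hence the
lift of every projection of a member of `𝒯` is in `𝒯`. The tangle axioms of `𝒯` then transfer to
the torso through shadows.
-/

variable {V : Type*} {W : Type*}

/-- A separation (Y,S,Z) of a graph: pairwise disjoint sets covering the vertex set,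
with no edge between Y and Z. -/
def IsSeparation (G : SimpleGraph V) (Y S Z : Set V) : Prop :=
  Disjoint Y S ∧ Disjoint Y Z ∧ Disjoint S Z ∧ Y ∪ S ∪ Z = Set.univ ∧
    ∀ y ∈ Y, ∀ z ∈ Z, ¬ G.Adj y z

/-- `G` is `k`-connected: more than `k` vertices and no proper separation of order `< k`. -/
def KConnected (k : ℕ) (G : SimpleGraph V) : Prop :=
  k < Nat.card V ∧
    ∀ Y S Z : Set V, IsSeparation G Y S Z → Y.Nonempty → Z.Nonempty → k ≤ S.ncard

/-- `G` is quasi-4-connected. -/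
def Quasi4Connected (G : SimpleGraph V) : Prop :=
  KConnected 3 G ∧
    ∀ Y S Z : Set V, IsSeparation G Y S Z → S.ncard = 3 → Y.ncard ≤ 1 ∨ Z.ncard ≤ 1

/-- `T` is a `G`-tangle of order `k`. -/
def IsTangle (G : SimpleGraph V) (k : ℕ) (T : Set (Set V × Set V × Set V)) : Prop :=
  (∀ p ∈ T, IsSeparation G p.1 p.2.1 p.2.2 ∧ p.2.1.ncard < k) ∧
  (∀ Y S Z : Set V, IsSeparation G Y S Z → S.ncard < k →
    (Y, S, Z) ∈ T ∨ (Z, S, Y) ∈ T) ∧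
  (∀ p₁ ∈ T, ∀ p₂ ∈ T, ∀ p₃ ∈ T,
    (p₁.2.2 ∩ p₂.2.2 ∩ p₃.2.2 : Set V).Nonempty ∨
      ∃ u v : V, G.Adj u v ∧ (u ∈ p₁.2.2 ∨ v ∈ p₁.2.2) ∧
        (u ∈ p₂.2.2 ∨ v ∈ p₂.2.2) ∧ (u ∈ p₃.2.2 ∨ v ∈ p₃.2.2)) ∧
  (∀ p ∈ T, (p.2.2 : Set V).Nonempty)

/-- The order `⪯` on separations: (Y,S,Z) ⪯ (Y',S',Z') iff S ∪ Z ⊊ S' ∪ Z', or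
S ∪ Z = S' ∪ Z' and S ⊆ S'. -/
def SepLE (p q : Set V × Set V × Set V) : Prop :=
  p.2.1 ∪ p.2.2 ⊂ q.2.1 ∪ q.2.2 ∨
    (p.2.1 ∪ p.2.2 = q.2.1 ∪ q.2.2 ∧ p.2.1 ⊆ q.2.1)

/-- `p` is a `⪯`-minimal element of `T`. -/
def IsMinimalIn (T : Set (Set V × Set V × Set V)) (p : Set V × Set V × Set V) : Prop :=
  p ∈ T ∧ ∀ q ∈ T, SepLE q p → q = p

/-- Two separations are orthogonal. (They cross if they are not orthogonal.) -/
def SepOrthogonal (p q : Set V × Set V × Set V) : Prop :=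
  (p.1 ∪ p.2.1) ∩ (q.1 ∪ q.2.1) ⊆ p.2.1 ∩ q.2.1

/-- A separation (Y,S,Z) is degenerate: |Y| = 1 and S is an independent set. -/
def Degenerate (G : SimpleGraph V) (Y S Z : Set V) : Prop :=
  Y.ncard = 1 ∧ ∀ u ∈ S, ∀ v ∈ S, ¬ G.Adj u v

/-- The neighbourhood N(X): vertices outside X adjacent to a vertex of X. -/
def Nbhd (G : SimpleGraph V) (X : Set V) : Set V :=
  {v | v ∉ X ∧ ∃ u ∈ X, G.Adj u v}

/-- `C` is (the vertex set of) a connected component of `G − X`. -/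
def IsCompOutside (G : SimpleGraph V) (X C : Set V) : Prop :=
  C ⊆ Xᶜ ∧ (G.induce C).Connected ∧ ∀ u ∈ C, ∀ v : V, v ∉ X → G.Adj u v → v ∈ C

/-- The torso `G⟦X⟧` of `X` in `G`. -/
def torso (G : SimpleGraph V) (X : Set V) : SimpleGraph X where
  Adj u v := u ≠ v ∧ (G.Adj (u : V) (v : V) ∨
    ∃ C : Set V, IsCompOutside G X C ∧ (u : V) ∈ Nbhd G C ∧ (v : V) ∈ Nbhd G C)
  symm := by
    constructor
    rintro u v ⟨hne, h | ⟨C, hC, hu, hv⟩⟩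
    · exact ⟨hne.symm, Or.inl h.symm⟩
    · exact ⟨hne.symm, Or.inr ⟨C, hC, hv, hu⟩⟩
  loopless := by
    constructor
    intro u h
    exact h.1 rfl

/-- `H` is a minor of `G`. -/
def IsMinor (H : SimpleGraph W) (G : SimpleGraph V) : Prop :=
  ∃ M : W → Set V,
    (∀ w : W, (G.induce (M w)).Connected) ∧
    (Pairwise fun w w' : W => Disjoint (M w) (M w')) ∧
    ∀ w w' : W, H.Adj w w' → ∃ u ∈ M w, ∃ v ∈ M w', G.Adj u v

/-- `M` is a faithful model of the graph `H` (with vertex set `X ⊆ V(G)`) in `G`. -/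
def FaithfulModel (G : SimpleGraph V) (X : Set V) (H : SimpleGraph X)
    (M : X → Set V) : Prop :=
  (∀ w : X, (w : V) ∈ M w) ∧
  (∀ w : X, (G.induce (M w)).Connected) ∧
  (Pairwise fun w w' : X => Disjoint (M w) (M w')) ∧
  ∀ w w' : X, H.Adj w w' → ∃ u ∈ M w, ∃ v ∈ M w', G.Adj u v

/-- `H` (a graph with vertex set `X ⊆ V(G)`) is a faithful minor of `G`. -/
def IsFaithfulMinor (G : SimpleGraph V) (X : Set V) (H : SimpleGraph X) : Prop :=
  ∃ M : X → Set V, FaithfulModel G X H M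

/-- The projection of a separation of `G` to a minor with model `M`. -/
def projSep {X : Set V} (M : X → Set V) (p : Set V × Set V × Set V) :
    Set X × Set X × Set X :=
  ({w : X | M w ⊆ p.1}, {w : X | (M w ∩ p.2.1).Nonempty}, {w : X | M w ⊆ p.2.2})

/-- The graph TH₊₃: vertices 0,1,2,3 are v₁,v₂,v₃,v₄ (pairwise adjacent); 4,5,6 are
w₁,w₂,w₃ with w₁ ~ v₁,v₂,v₃, w₂ ~ v₁,v₂,v₄, w₃ ~ v₁,v₃,v₄. -/
def TH3 : SimpleGraph (Fin 7) :=
  SimpleGraph.fromRel (fun u v =>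
    (u.val < 4 ∧ v.val < 4) ∨
    (u.val = 4 ∧ (v.val = 0 ∨ v.val = 1 ∨ v.val = 2)) ∨
    (u.val = 5 ∧ (v.val = 0 ∨ v.val = 1 ∨ v.val = 3)) ∨
    (u.val = 6 ∧ (v.val = 0 ∨ v.val = 2 ∨ v.val = 3)))

/-- The graph TR₊₃: vertices 0,1,2 are v₁,v₂,v₃ (pairwise adjacent); 3,4,5 are
w₁,w₂,w₃, each adjacent to each of v₁,v₂,v₃. -/
def TR3 : SimpleGraph (Fin 6) :=
  SimpleGraph.fromRel (fun u v =>
    (u.val < 3 ∧ v.val < 3) ∨ (3 ≤ u.val ∧ v.val < 3))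

/-- A graph is exceptional if it embeds (injectively, preserving adjacency)
into TH₊₃ or into TR₊₃. -/
def Exceptional (H : SimpleGraph W) : Prop :=
  (∃ f : W → Fin 7, Function.Injective f ∧ ∀ u v : W, H.Adj u v → TH3.Adj (f u) (f v)) ∨
  (∃ f : W → Fin 6, Function.Injective f ∧ ∀ u v : W, H.Adj u v → TR3.Adj (f u) (f v))

/-- `X` is a `k`-inseparable set of `G`. -/
def KInseparable (G : SimpleGraph V) (k : ℕ) (X : Set V) : Prop :=
  k < X.ncard ∧
    ¬ ∃ Y S Z : Set V, IsSeparation G Y S Z ∧ S.ncard ≤ k ∧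
      (X ∩ Y).Nonempty ∧ (X ∩ Z).Nonempty

/-- A triconnected region: a maximal 2-inseparable set of size ≥ 4. -/
def TriconnectedRegion (G : SimpleGraph V) (R : Set V) : Prop :=
  KInseparable G 2 R ∧ 4 ≤ R.ncard ∧ ∀ R' : Set V, R ⊂ R' → ¬ KInseparable G 2 R'

/-- `H` is a topological subgraph of `G`. -/
def IsTopologicalSubgraph (H : SimpleGraph W) (G : SimpleGraph V) : Prop :=
  ∃ (φ : W → V) (P : ∀ u v : W, H.Adj u v → G.Walk (φ u) (φ v)),
    Function.Injective φ ∧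
    (∀ u v (h : H.Adj u v), (P u v h).IsPath) ∧
    (∀ u v (h : H.Adj u v), P u v h = (P v u h.symm).reverse) ∧
    (∀ u v (h : H.Adj u v), ∀ x ∈ (P u v h).support,
      x ∈ Set.range φ → x = φ u ∨ x = φ v) ∧
    (∀ u v (h : H.Adj u v), ∀ u' v' (h' : H.Adj u' v'), s(u, v) ≠ s(u', v') →
      ∀ x ∈ (P u v h).support, x ∈ (P u' v' h').support →
        (x = φ u ∨ x = φ v) ∧ (x = φ u' ∨ x = φ v'))

/-- A quasi-4-connected region of a 3-connected graph. -/
def Quasi4Region (G : SimpleGraph V) (R : Set V) : Prop :=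
  IsFaithfulMinor G R (torso G R) ∧ Quasi4Connected (torso G R) ∧
    ∀ C : Set V, IsCompOutside G R C → (Nbhd G C).ncard = 3

/-- A split vertex of a separation (Y₀,S₀,Z₀). -/
def SplitVertex (G : SimpleGraph V) (S₀ Z₀ : Set V) (z : V) : Prop :=
  z ∈ Z₀ ∧ ∀ C : Set V, IsCompOutside G (S₀ ∪ {z}) C → (Nbhd G C).ncard = 3

/-- The graph obtained from `G` by contracting the edge `s₁s₂` onto `s₁`. -/
def contractEdge (G : SimpleGraph V) (s₁ s₂ : V) : SimpleGraph ({s₂}ᶜ : Set V) where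
  Adj u v := u ≠ v ∧ (G.Adj (u : V) (v : V) ∨
    ((u : V) = s₁ ∧ G.Adj (v : V) s₂) ∨ ((v : V) = s₁ ∧ G.Adj (u : V) s₂))
  symm := by
    constructor
    rintro u v ⟨hne, h | h | h⟩
    · exact ⟨hne.symm, Or.inl h.symm⟩
    · exact ⟨hne.symm, Or.inr (Or.inr h)⟩
    · exact ⟨hne.symm, Or.inr (Or.inl h)⟩
  loopless := by
    constructor
    intro u h
    exact h.1 rfl

/-- `s t` are the endvertices of a crossedge of two crossing non-degenerate minimal
separations of the tangle `T`, with `s ∈ S₁` and `t ∈ S₂`. -/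
def IsNondegCrossedge (G : SimpleGraph V) (T : Set (Set V × Set V × Set V))
    (s t : V) : Prop :=
  ∃ p q : Set V × Set V × Set V,
    IsMinimalIn T p ∧ IsMinimalIn T q ∧
    ¬ Degenerate G p.1 p.2.1 p.2.2 ∧ ¬ Degenerate G q.1 q.2.1 q.2.2 ∧
    ¬ SepOrthogonal p q ∧ G.Adj s t ∧ p.2.1 ∩ q.1 = {s} ∧ q.2.1 ∩ p.1 = {t}


section Separation

variable {G : SimpleGraph V} {Y S Z : Set V}

theorem IsSeparation.symm (h : IsSeparation G Y S Z) : IsSeparation G Z S Y := by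
  obtain ⟨hYS, hYZ, hSZ, hcov, hadj⟩ := h
  refine ⟨hSZ.symm, hYZ.symm, hYS.symm, ?_, fun z hz y hy h => hadj y hy z hz h.symm⟩
  rw [← hcov]
  ext x
  simp only [Set.mem_union]
  tauto

theorem IsSeparation.mem_or_mem_or_mem (h : IsSeparation G Y S Z) (x : V) :
    x ∈ Y ∨ x ∈ S ∨ x ∈ Z := by
  have hx := h.2.2.2.1 ▸ Set.mem_univ x
  simp only [Set.mem_union] at hx
  tauto

theorem IsSeparation.eq_compl (h : IsSeparation G Y S Z) : Y = (S ∪ Z)ᶜ := by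
  ext x
  simp only [Set.mem_compl_iff, Set.mem_union, not_or]
  refine ⟨fun hx => ⟨Set.disjoint_left.1 h.1 hx, Set.disjoint_left.1 h.2.1 hx⟩, fun hx => ?_⟩
  have := h.mem_or_mem_or_mem x
  tauto

theorem IsSeparation.mem_of_adj (h : IsSeparation G Y S Z) {z y : V} (hz : z ∈ Z)
    (hzy : G.Adj z y) : y ∈ S ∪ Z := by
  by_contra hy
  exact h.2.2.2.2 y (h.eq_compl ▸ hy) z hz hzy.symm

theorem isSeparation_compl (hSZ : Disjoint S Z) (hZ : ∀ z ∈ Z, ∀ y, G.Adj z y → y ∈ S ∪ Z) :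
    IsSeparation G (S ∪ Z)ᶜ S Z := by
  refine ⟨Set.disjoint_compl_left_iff_subset.2 Set.subset_union_left,
    Set.disjoint_compl_left_iff_subset.2 Set.subset_union_right, hSZ, ?_,
    fun y hy z hz hyz => hy (hZ z hz y hyz.symm)⟩
  rw [Set.union_assoc, Set.compl_union_self]

theorem IsSeparation.exists_mem_support (h : IsSeparation G Y S Z) {u v : V} (W : G.Walk u v)
    (hu : u ∉ Y) (hv : v ∈ Y) : ∃ s ∈ W.support, s ∈ S := by
  obtain ⟨d, hd, hd₁, hd₂⟩ := W.exists_boundary_dart Yᶜ hu (not_not.2 hv)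
  refine ⟨d.fst, W.dart_fst_mem_support_of_mem_darts hd, ?_⟩
  exact (h.symm.mem_of_adj (not_not.1 hd₂) d.adj.symm).resolve_right hd₁

theorem mem_or_mem_nbhd_of_adj {X : Set V} {u v : V} (hu : u ∈ X) (huv : G.Adj u v) :
    v ∈ X ∨ v ∈ Nbhd G X :=
  or_iff_not_imp_left.2 fun hv => ⟨hv, u, hu, huv⟩

theorem isSeparation_nbhd (X : Set V) : IsSeparation G X (Nbhd G X) (Nbhd G X ∪ X)ᶜ :=
  (isSeparation_compl (Set.disjoint_left.2 fun _ hx => hx.1) fun _ hx _ hxy =>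
    (mem_or_mem_nbhd_of_adj hx hxy).symm).symm

end Separation

section Tangle

variable {G : SimpleGraph V} {k : ℕ} {T : Set (Set V × Set V × Set V)}
  {Y S Z A B E Y₂ S₂ Z₂ : Set V}

/-- If the reverse of `(Y₂, S₂, Z₂)` were in `T`, it would violate the triple axiom together with
`(Y, S, Z)` and `(A, B, E)`. -/
theorem IsTangle.mem_of_inter_subset (hT : IsTangle G k T) (hp : (Y, S, Z) ∈ T)
    (hr : (A, B, E) ∈ T) (hsep : IsSeparation G Y₂ S₂ Z₂) (hord : S₂.ncard < k)
    (hZ : Z ∩ E ⊆ Z₂) (hY : Y₂ ∩ (Z ∪ E) ⊆ Y ∪ A) : (Y₂, S₂, Z₂) ∈ T := by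
  refine (hT.2.1 Y₂ S₂ Z₂ hsep hord).resolve_right fun hrev => ?_
  have hp' := (hT.1 _ hp).1
  have hr' := (hT.1 _ hr).1
  have hZE : ∀ x y, G.Adj x y → x ∈ Z → x ∈ E → x ∈ Y₂ ∨ y ∈ Y₂ → False := by
    intro x y hxy hxZ hxE hY₂
    have hx : x ∈ Z₂ := hZ ⟨hxZ, hxE⟩
    rcases hY₂ with hx' | hy
    · exact Set.disjoint_left.1 hsep.2.1 hx' hx
    · exact hsep.2.2.2.2 y hy x hx hxy.symm
  have hZtoE : ∀ x y, G.Adj x y → x ∈ Z → y ∈ E → x ∈ Y₂ ∨ y ∈ Y₂ → False := by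
    intro x y hxy hxZ hyE hY₂
    rcases hY₂ with hx | hy
    · rcases hY ⟨hx, Or.inl hxZ⟩ with hxY | hxA
      · exact Set.disjoint_left.1 hp'.2.1 hxY hxZ
      · exact hr'.2.2.2.2 x hxA y hyE hxy
    · rcases hY ⟨hy, Or.inr hyE⟩ with hyY | hyA
      · exact hp'.2.2.2.2 y hyY x hxZ hxy.symm
      · exact Set.disjoint_left.1 hr'.2.1 hyA hyE
  rcases hT.2.2.1 _ hp _ hr _ hrev with ⟨x, ⟨hxZ, hxE⟩, hxY⟩ | ⟨u, v, huv, hZ', hE', hY'⟩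
  · exact Set.disjoint_left.1 hsep.2.1 hxY (hZ ⟨hxZ, hxE⟩)
  · rcases hZ' with hu | hv <;> rcases hE' with hu' | hv'
    · exact hZE u v huv hu hu' hY'
    · exact hZtoE u v huv hu hv' hY'
    · exact hZtoE v u huv.symm hv hu' hY'.symm
    · exact hZE v u huv.symm hv hv' hY'.symm

theorem IsTangle.mem_of_far_subset (hT : IsTangle G k T) (hp : (Y, S, Z) ∈ T)
    (hsep : IsSeparation G Y₂ S₂ Z₂) (hord : S₂.ncard < k) (hZ : Z ⊆ Z₂) :
    (Y₂, S₂, Z₂) ∈ T :=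
  hT.mem_of_inter_subset hp hp hsep hord (Set.inter_subset_left.trans hZ)
    fun _ ⟨hy, hyZ⟩ => absurd (hZ (hyZ.elim id id)) (Set.disjoint_left.1 hsep.2.1 hy)

end Tangle

section Components

open SimpleGraph

variable {G : SimpleGraph V} {K : Set V}

theorem SimpleGraph.ComponentCompl.connected_induce (C : G.ComponentCompl K) :
    (G.induce (C : Set V)).Connected := by
  classical
  refine C.ind fun v hv => ?_
  rw [connected_iff_exists_forall_reachable]
  refine ⟨⟨v, componentComplMk_mem G hv⟩, ?_⟩
  rintro ⟨w, hwK, hw⟩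
  obtain ⟨p⟩ := ConnectedComponent.exact hw.symm
  have hp : ∀ x ∈ (p.map (Embedding.induce Kᶜ).toHom).support,
      x ∈ (G.componentComplMk hv : Set V) := by
    simp only [Walk.support_map, List.mem_map]
    rintro _ ⟨y, hy, rfl⟩
    exact ⟨y.2, ConnectedComponent.sound (p.takeUntil y hy).reachable.symm⟩
  exact ((p.map _).induce _ hp).reachable

theorem SimpleGraph.ComponentCompl.isCompOutside (C : G.ComponentCompl K) :
    IsCompOutside G K C :=
  ⟨fun _ hx => ComponentCompl.notMem_of_mem hx, C.connected_induce,
    fun u hu v hv huv => ComponentCompl.mem_of_adj u v hu hv huv⟩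

theorem SimpleGraph.ComponentCompl.nbhd_subset (C : G.ComponentCompl K) : Nbhd G C ⊆ K :=
  fun x ⟨hxC, u, hu, hux⟩ => by_contra fun hx => hxC (ComponentCompl.mem_of_adj u x hu hx hux)

end Components

section Fan

open SimpleGraph

variable {G : SimpleGraph V}

theorem SimpleGraph.Walk.exists_walk_first_mem {X : Set V} {a b : V} (p : G.Walk a b)
    (hb : b ∈ X) :
    ∃ v ∈ X, ∃ q : G.Walk a v, q.support ⊆ p.support ∧ ∀ x ∈ q.support, x ∈ X → x = v := by
  induction p with
  | nil => exact ⟨_, hb, Walk.nil, List.Subset.refl _, by simp⟩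
  | @cons a c b hac p ih =>
    by_cases ha : a ∈ X
    · exact ⟨a, ha, Walk.nil, by simp, by simp⟩
    obtain ⟨v, hv, q, hqp, hq⟩ := ih hb
    refine ⟨v, hv, Walk.cons hac q, by simpa using List.cons_subset_cons a hqp, ?_⟩
    rintro x hx hxX
    rcases List.mem_cons.1 (Walk.support_cons hac q ▸ hx) with rfl | hx
    · exact absurd hxX ha
    · exact hq x hx hxX

theorem exists_walk_of_connected_induce {C : Set V} (hC : (G.induce C).Connected) {a b : V}
    (ha : a ∈ C) (hb : b ∈ C) : ∃ p : G.Walk a b, ∀ x ∈ p.support, x ∈ C := by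
  obtain ⟨p⟩ := hC.preconnected ⟨a, ha⟩ ⟨b, hb⟩
  refine ⟨p.map (Embedding.induce C).toHom, fun x hx => ?_⟩
  obtain ⟨y, -, rfl⟩ := List.mem_map.1 ((Walk.support_map _ p) ▸ hx)
  exact y.2

/-- The centre is where a walk from the first attachment vertex first hits a path between the
other two. -/
theorem exists_fan {C : Set V} (hC : (G.induce C).Connected) {n₁ n₂ n₃ : V}
    (h₁ : n₁ ∈ Nbhd G C) (h₂ : n₂ ∈ Nbhd G C) (h₃ : n₃ ∈ Nbhd G C)
    (h₁₂ : n₁ ≠ n₂) (h₁₃ : n₁ ≠ n₃) (h₂₃ : n₂ ≠ n₃) :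
    ∃ v ∈ C, ∃ (W₁ : G.Walk n₁ v) (W₂ : G.Walk n₂ v) (W₃ : G.Walk n₃ v),
      (∀ x ∈ W₁.support, x ∈ W₂.support → x = v) ∧
      (∀ x ∈ W₁.support, x ∈ W₃.support → x = v) ∧
      (∀ x ∈ W₂.support, x ∈ W₃.support → x = v) := by
  classical
  obtain ⟨hn₁, c₁, hc₁, hc₁n⟩ := h₁
  obtain ⟨hn₂, c₂, hc₂, hc₂n⟩ := h₂
  obtain ⟨hn₃, c₃, hc₃, hc₃n⟩ := h₃
  obtain ⟨P₀, hP₀⟩ := exists_walk_of_connected_induce hC hc₂ hc₃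
  obtain ⟨Q₀, hQ₀⟩ := exists_walk_of_connected_induce hC hc₁ hc₂
  set P := P₀.bypass
  have hPC : ∀ x ∈ P.support, x ∈ C := fun x hx => hP₀ x (P₀.support_bypass_subset_support hx)
  obtain ⟨v, hvP, Q, hQQ₀, hQP⟩ :=
    Q₀.exists_walk_first_mem (X := {x | x ∈ P.support}) P.start_mem_support
  have hQC : ∀ x ∈ Q.support, x ∈ C := fun x hx => hQ₀ x (hQQ₀ hx)
  set P₁ := P.takeUntil v hvP
  set P₂ := (P.dropUntil v hvP).reverse
  have hP₁ : ∀ x ∈ P₁.support, x ∈ P.support :=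
    fun x hx => P.support_takeUntil_subset_support hvP hx
  have hP₂ : ∀ x ∈ P₂.support, x ∈ P.support := fun x hx =>
    P.support_dropUntil_subset_support hvP (by simpa [P₂] using hx)
  have hP₁₂ : ∀ x ∈ P₁.support, x ∈ P₂.support → x = v := by
    intro x hx₁ hx₂
    by_contra hxv
    have hnodup : P.support.Nodup := P₀.bypass_isPath.support_nodup
    rw [← P.take_spec hvP, Walk.support_append, List.nodup_append] at hnodup
    rw [Walk.support_reverse, List.mem_reverse, ← Walk.cons_tail_support, List.mem_cons] at hx₂
    exact hnodup.2.2 x hx₁ x (hx₂.resolve_left hxv) rfl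
  have extend : ∀ {a b : V} {L L' : List V}, a ∉ C → b ∉ C → a ≠ b →
      (∀ x ∈ L, x ∈ C) → (∀ x ∈ L', x ∈ C) → (∀ x ∈ L, x ∈ L' → x = v) →
      ∀ x ∈ a :: L, x ∈ b :: L' → x = v := by
    intro a b L L' ha hb hab hL hL' hLL' x hx hx'
    rcases List.mem_cons.1 hx with rfl | hx <;> rcases List.mem_cons.1 hx' with rfl | hx'
    · exact absurd rfl hab
    · exact absurd (hL' x hx') ha
    · exact absurd (hL x hx) hb
    · exact hLL' x hx hx'
  have hP₁C : ∀ x ∈ P₁.support, x ∈ C := fun x hx => hPC x (hP₁ x hx)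
  have hP₂C : ∀ x ∈ P₂.support, x ∈ C := fun x hx => hPC x (hP₂ x hx)
  refine ⟨v, hPC v hvP, Walk.cons hc₁n.symm Q, Walk.cons hc₂n.symm P₁, Walk.cons hc₃n.symm P₂,
    ?_, ?_, ?_⟩ <;> simp only [Walk.support_cons]
  · exact extend hn₁ hn₂ h₁₂ hQC hP₁C fun x hx hx' => hQP x hx (hP₁ x hx')
  · exact extend hn₁ hn₃ h₁₃ hQC hP₂C fun x hx hx' => hQP x hx (hP₂ x hx')
  · exact extend hn₂ hn₃ h₂₃ hP₁C hP₂C hP₁₂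

end Fan

section Region

variable [Finite V] {G : SimpleGraph V} {R : Set V}

/-- By maximality `R ∪ {v}` is 2-separable, while `R` is not. -/
theorem TriconnectedRegion.exists_separation_isolating (hR : TriconnectedRegion G R) {v : V}
    (hv : v ∉ R) : ∃ A S Z, IsSeparation G A S Z ∧ S.ncard ≤ 2 ∧ v ∈ A ∧ Disjoint A R := by
  have hcard : 2 < (insert v R).ncard := by
    rw [Set.ncard_insert_of_notMem hv]
    have := hR.2.1
    omega
  have hsep := hR.2.2 (insert v R) (Set.ssubset_insert hv)
  simp only [KInseparable, hcard, true_and, not_not] at hsep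
  obtain ⟨Y, S, Z, hsep, hS, ⟨y, hyX, hyY⟩, ⟨z, hzX, hzZ⟩⟩ := hsep
  have isolate : ∀ {A : Set V} {a : V}, a ∈ insert v R → a ∈ A → ¬ (R ∩ A).Nonempty →
      v ∈ A ∧ Disjoint A R := by
    intro A a haX haA hRA
    refine ⟨?_, Set.disjoint_left.2 fun x hxA hxR => hRA ⟨x, hxR, hxA⟩⟩
    rcases haX with rfl | haR
    · exact haA
    · exact absurd ⟨a, haR, haA⟩ hRA
  by_cases hRZ : (R ∩ Z).Nonempty
  · have hRY : ¬ (R ∩ Y).Nonempty := fun hRY => hR.1.2 ⟨Y, S, Z, hsep, hS, hRY, hRZ⟩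
    exact ⟨Y, S, Z, hsep, hS, isolate hyX hyY hRY⟩
  · exact ⟨Z, S, Y, hsep.symm, hS, isolate hzX hzZ hRZ⟩

theorem TriconnectedRegion.ncard_nbhd_le_two (hR : TriconnectedRegion G R)
    (C : G.ComponentCompl R) : (Nbhd G C).ncard ≤ 2 := by
  by_contra! h
  obtain ⟨n₁, h₁, n₂, h₂, n₃, h₃, h₁₂, h₁₃, h₂₃⟩ := (Set.two_lt_ncard).1 h
  obtain ⟨v, hvC, W₁, W₂, W₃, hW₁₂, hW₁₃, hW₂₃⟩ :=
    exists_fan C.connected_induce h₁ h₂ h₃ h₁₂ h₁₃ h₂₃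
  obtain ⟨A, S, Z, hsep, hS, hvA, hAR⟩ :=
    hR.exists_separation_isolating (SimpleGraph.ComponentCompl.notMem_of_mem hvC)
  have hnA : ∀ n ∈ Nbhd G C, n ∉ A := fun n hn hnA =>
    Set.disjoint_left.1 hAR hnA (C.nbhd_subset hn)
  obtain ⟨s₁, hs₁, hs₁S⟩ := hsep.exists_mem_support W₁ (hnA _ h₁) hvA
  obtain ⟨s₂, hs₂, hs₂S⟩ := hsep.exists_mem_support W₂ (hnA _ h₂) hvA
  obtain ⟨s₃, hs₃, hs₃S⟩ := hsep.exists_mem_support W₃ (hnA _ h₃) hvA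
  have hv : ∀ s ∈ S, s ≠ v := fun s hs hsv => Set.disjoint_left.1 hsep.1 (hsv ▸ hvA) hs
  have : 2 < S.ncard := (Set.two_lt_ncard).2 ⟨s₁, hs₁S, s₂, hs₂S, s₃, hs₃S,
    fun h => hv _ hs₁S (hW₁₂ _ hs₁ (h ▸ hs₂)), fun h => hv _ hs₁S (hW₁₃ _ hs₁ (h ▸ hs₃)),
    fun h => hv _ hs₂S (hW₂₃ _ hs₂ (h ▸ hs₃))⟩
  omega

end Region

section Shadow

open SimpleGraph

variable {G : SimpleGraph V} {R : Set V}

/-- The vertices of the torso that `x` is attached to: `x` itself if `x ∈ R`, and the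
attachment set `N(C)` of its component `C` of `G - R` otherwise. -/
def shadow (G : SimpleGraph V) (R : Set V) (x : V) : Set R :=
  {w | (w : V) = x ∨ ∃ C : G.ComponentCompl R, x ∈ C ∧ (w : V) ∈ Nbhd G C}

theorem shadow_of_mem {x : V} (hx : x ∈ R) : shadow G R x = {⟨x, hx⟩} := by
  ext w
  simp only [shadow, Set.mem_ofPred_eq, Set.mem_singleton_iff]
  constructor
  · rintro (h | ⟨C, hxC, -⟩)
    · exact Subtype.ext h
    · exact absurd hx (ComponentCompl.notMem_of_mem hxC)
  · rintro rfl
    exact Or.inl rfl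

theorem shadow_of_notMem {x : V} (hx : x ∉ R) :
    shadow G R x = Subtype.val ⁻¹' Nbhd G (G.componentComplMk hx) := by
  ext w
  simp only [shadow, Set.mem_ofPred_eq, Set.mem_preimage]
  constructor
  · rintro (h | ⟨C, hxC, hw⟩)
    · exact absurd (h ▸ w.2) hx
    · obtain ⟨_, rfl⟩ := ComponentCompl.mem_supp_iff.1 hxC
      exact hw
  · exact fun hw => Or.inr ⟨_, componentComplMk_mem G hx, hw⟩

theorem shadow_subset_of_adj {a b : V} (h : G.Adj a b) (hb : b ∉ R) :
    shadow G R a ⊆ shadow G R b := by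
  rw [shadow_of_notMem hb]
  by_cases ha : a ∈ R
  · rw [shadow_of_mem ha, Set.singleton_subset_iff]
    exact ⟨fun haC => ComponentCompl.notMem_of_mem haC ha, b, componentComplMk_mem G hb, h.symm⟩
  · rw [shadow_of_notMem ha, componentComplMk_eq_of_adj G ha hb h]

theorem shadow_union_of_adj {a b : V} (h : G.Adj a b) :
    shadow G R a ∪ shadow G R b = shadow G R a ∨ shadow G R a ∪ shadow G R b = shadow G R b ∨
      ∃ (ha : a ∈ R) (hb : b ∈ R), shadow G R a ∪ shadow G R b = {⟨a, ha⟩, ⟨b, hb⟩} := by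
  by_cases hb : b ∈ R
  · by_cases ha : a ∈ R
    · exact Or.inr (Or.inr ⟨ha, hb, by rw [shadow_of_mem ha, shadow_of_mem hb]; rfl⟩)
    · exact Or.inl (Set.union_eq_left.2 (shadow_subset_of_adj h.symm ha))
  · exact Or.inr (Or.inl (Set.union_eq_right.2 (shadow_subset_of_adj h hb)))

theorem isClique_shadow (x : V) : (torso G R).IsClique (shadow G R x) := by
  by_cases hx : x ∈ R
  · rw [shadow_of_mem hx]
    exact isClique_singleton _
  · rw [shadow_of_notMem hx]
    exact fun u hu w hw huw =>
      ⟨huw, Or.inr ⟨_, (G.componentComplMk hx).isCompOutside, hu, hw⟩⟩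

theorem isClique_shadow_union {a b : V} (h : G.Adj a b) :
    (torso G R).IsClique (shadow G R a ∪ shadow G R b) := by
  rcases shadow_union_of_adj h with e | e | ⟨ha, hb, e⟩ <;> rw [e]
  · exact isClique_shadow a
  · exact isClique_shadow b
  · exact isClique_pair.2 fun hne => ⟨hne, Or.inl h⟩

def liftFar (G : SimpleGraph V) (R : Set V) (Z' : Set R) : Set V :=
  {x | (shadow G R x ∩ Z').Nonempty}

theorem val_mem_liftFar {w : R} {Z' : Set R} : (w : V) ∈ liftFar G R Z' ↔ w ∈ Z' := by
  simp [liftFar, shadow_of_mem w.2]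

variable [Finite V]

theorem ncard_shadow_le_two (hR : TriconnectedRegion G R) (x : V) :
    (shadow G R x).ncard ≤ 2 := by
  by_cases hx : x ∈ R
  · rw [shadow_of_mem hx, Set.ncard_singleton]
    omega
  · rw [shadow_of_notMem hx, Set.ncard_preimage_of_injective_subset_range Subtype.val_injective
      (by rw [Subtype.range_coe]; exact ComponentCompl.nbhd_subset _)]
    exact hR.ncard_nbhd_le_two _

theorem ncard_shadow_union_le_two (hR : TriconnectedRegion G R) {a b : V} (h : G.Adj a b) :
    (shadow G R a ∪ shadow G R b).ncard ≤ 2 := by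
  rcases shadow_union_of_adj h with e | e | ⟨ha, hb, e⟩ <;> rw [e]
  · exact ncard_shadow_le_two hR a
  · exact ncard_shadow_le_two hR b
  · exact (Set.ncard_insert_le _ _).trans (by rw [Set.ncard_singleton])

end Shadow

theorem inter_nonempty_or_exists_adj_of_isClique [Finite W] {H : SimpleGraph W}
    {K Z₁ Z₂ Z₃ : Set W} (hK : H.IsClique K) (hcard : K.ncard ≤ 2) (h₁ : (K ∩ Z₁).Nonempty)
    (h₂ : (K ∩ Z₂).Nonempty) (h₃ : (K ∩ Z₃).Nonempty) :
    (Z₁ ∩ Z₂ ∩ Z₃).Nonempty ∨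
      ∃ u v, H.Adj u v ∧ (u ∈ Z₁ ∨ v ∈ Z₁) ∧ (u ∈ Z₂ ∨ v ∈ Z₂) ∧ (u ∈ Z₃ ∨ v ∈ Z₃) := by
  obtain ⟨b₁, hb₁K, hb₁⟩ := h₁
  obtain ⟨b₂, hb₂K, hb₂⟩ := h₂
  obtain ⟨b₃, hb₃K, hb₃⟩ := h₃
  by_cases hK₁ : K.Subsingleton
  · exact Or.inl ⟨b₁, ⟨hb₁, hK₁ hb₂K hb₁K ▸ hb₂⟩, hK₁ hb₃K hb₁K ▸ hb₃⟩
  obtain ⟨u, hu, v, hv, huv⟩ := Set.not_subsingleton_iff.1 hK₁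
  have hKuv : {u, v} = K := Set.eq_of_subset_of_ncard_le (Set.insert_subset hu
    (Set.singleton_subset_iff.2 hv)) (by rw [Set.ncard_pair huv]; exact hcard)
  have hpair : ∀ {Z : Set W} {b : W}, b ∈ K → b ∈ Z → u ∈ Z ∨ v ∈ Z := by
    intro Z b hb hbZ
    rcases hKuv ▸ hb with rfl | rfl
    · exact Or.inl hbZ
    · exact Or.inr hbZ
  exact Or.inr ⟨u, v, hK hu hv huv, hpair hb₁K hb₁, hpair hb₂K hb₂, hpair hb₃K hb₃⟩

section RegionTangle

open SimpleGraph

variable [Finite V] {G : SimpleGraph V} {R : Set V} {T : Set (Set V × Set V × Set V)}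

theorem componentSeparation_mem (hR : TriconnectedRegion G R)
    (hTR : ∀ Y S Z, IsSeparation G Y S Z → S.ncard < 3 → R ⊆ S ∪ Z → (Y, S, Z) ∈ T)
    (C : G.ComponentCompl R) : ((C : Set V), Nbhd G C, (Nbhd G C ∪ C)ᶜ) ∈ T := by
  refine hTR _ _ _ (isSeparation_nbhd _) (by have := hR.ncard_nbhd_le_two C; omega) ?_
  intro r hr
  by_cases hrN : r ∈ Nbhd G C
  · exact Or.inl hrN
  · exact Or.inr fun h => h.elim hrN fun hrC => ComponentCompl.notMem_of_mem hrC hr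

/-- The orientation is forced by `(Y, S, Z)` together with the separation cutting off `C`. -/
theorem mem_of_diff_component (hR : TriconnectedRegion G R) (hT : IsTangle G 4 T)
    (hTR : ∀ Y S Z, IsSeparation G Y S Z → S.ncard < 3 → R ⊆ S ∪ Z → (Y, S, Z) ∈ T)
    {Y S Z : Set V} (hp : (Y, S, Z) ∈ T) (C : G.ComponentCompl R)
    (hC : Disjoint (Nbhd G C) Z) : ((S \ C ∪ Z \ C)ᶜ, S \ C, Z \ C) ∈ T := by
  have hsep : IsSeparation G Y S Z := (hT.1 _ hp).1
  have hord : S.ncard < 4 := (hT.1 _ hp).2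
  have hsep' : IsSeparation G (S \ C ∪ Z \ C)ᶜ (S \ C) (Z \ C) := by
    refine isSeparation_compl (hsep.2.2.1.mono Set.sdiff_subset Set.sdiff_subset) ?_
    intro z hz y hzy
    have hyC : y ∉ C := fun hyC => (mem_or_mem_nbhd_of_adj hyC hzy.symm).elim hz.2
      fun hzN => Set.disjoint_left.1 hC hzN hz.1
    exact (hsep.mem_of_adj hz.1 hzy).imp (⟨·, hyC⟩) (⟨·, hyC⟩)
  refine hT.mem_of_inter_subset hp (componentSeparation_mem hR hTR C) hsep'
    ((Set.ncard_le_ncard Set.sdiff_subset).trans_lt hord) ?_ ?_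
  · exact fun x ⟨hxZ, hxE⟩ => ⟨hxZ, fun hxC => hxE (Or.inr hxC)⟩
  · rintro x ⟨hx, hxZ | hxE⟩
    · exact Or.inr (by_contra fun hxC => hx (Or.inr ⟨hxZ, hxC⟩))
    · have hxC : x ∉ (C : Set V) := fun hxC => hxE (Or.inr hxC)
      refine Or.inl ?_
      rw [hsep.eq_compl]
      exact fun hxSZ => hx (hxSZ.imp (⟨·, hxC⟩) (⟨·, hxC⟩))

/-- Move the components of `G - R` that do not attach to `Z ∩ R` across, one at a time. -/
theorem exists_mem_far_subset_liftFar (hR : TriconnectedRegion G R) (hT : IsTangle G 4 T)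
    (hTR : ∀ Y S Z, IsSeparation G Y S Z → S.ncard < 3 → R ⊆ S ∪ Z → (Y, S, Z) ∈ T)
    {Y S Z : Set V} (hp : (Y, S, Z) ∈ T) :
    ∃ p' ∈ T, p'.2.2 ⊆ Z ∧ p'.2.2 ⊆ liftFar G R (Subtype.val ⁻¹' p'.2.2) := by
  by_cases hclean : Z ⊆ liftFar G R (Subtype.val ⁻¹' Z)
  · exact ⟨_, hp, subset_rfl, hclean⟩
  obtain ⟨x, hxZ, hx⟩ := Set.not_subset.1 hclean
  have hxR : x ∉ R := fun hxR => hx (val_mem_liftFar (w := ⟨x, hxR⟩).2 hxZ)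
  set C := G.componentComplMk hxR
  have hC : Disjoint (Nbhd G C) Z := Set.disjoint_left.2 fun r hr hrZ =>
    hx ⟨⟨r, C.nbhd_subset hr⟩, by rw [shadow_of_notMem hxR]; exact hr, hrZ⟩
  have hlt : (Z \ C).ncard < Z.ncard :=
    Set.ncard_lt_ncard ⟨Set.sdiff_subset, fun h => (h hxZ).2 (componentComplMk_mem G hxR)⟩
  obtain ⟨p', hp', hsub, hclean'⟩ :=
    exists_mem_far_subset_liftFar hR hT hTR (mem_of_diff_component hR hT hTR hp C hC)
  exact ⟨p', hp', hsub.trans Set.sdiff_subset, hclean'⟩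
termination_by Z.ncard

end RegionTangle

section Lift

open SimpleGraph

variable {G : SimpleGraph V} {R : Set V}

/-- The canonical separation of `G` inducing a separation `q` of the torso: a vertex outside
`R` goes to the far side iff its component attaches to the far side of `q`. -/
def liftSep (G : SimpleGraph V) (R : Set V) (q : Set R × Set R × Set R) :
    Set V × Set V × Set V :=
  ((Subtype.val '' q.2.1 ∪ liftFar G R q.2.2)ᶜ, Subtype.val '' q.2.1, liftFar G R q.2.2)

theorem isSeparation_liftSep {q : Set R × Set R × Set R}
    (hq : IsSeparation (torso G R) q.1 q.2.1 q.2.2) :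
    IsSeparation G (liftSep G R q).1 (liftSep G R q).2.1 (liftSep G R q).2.2 := by
  refine isSeparation_compl ?_ ?_
  · refine Set.disjoint_left.2 ?_
    rintro _ ⟨s, hs, rfl⟩ hsZ
    exact Set.disjoint_left.1 hq.2.2.1 hs (val_mem_liftFar.1 hsZ)
  · rintro z ⟨w, hwz, hwZ⟩ y hzy
    by_cases hy : y ∈ R
    · rcases hq.mem_or_mem_or_mem ⟨y, hy⟩ with hyY | hyS | hyZ
      · have hne : (⟨y, hy⟩ : R) ≠ w := fun h => Set.disjoint_left.1 hq.2.1 hyY (h ▸ hwZ)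
        have hyz : (⟨y, hy⟩ : R) ∈ shadow G R y := by rw [shadow_of_mem hy]; rfl
        exact absurd (isClique_shadow_union hzy (Or.inr hyz) (Or.inl hwz) hne)
          (hq.2.2.2.2 _ hyY _ hwZ)
      · exact Or.inl ⟨_, hyS, rfl⟩
      · exact Or.inr (val_mem_liftFar.2 hyZ)
    · exact Or.inr ⟨w, shadow_subset_of_adj hzy hy hwz, hwZ⟩

theorem preimage_liftSep {q : Set R × Set R × Set R}
    (hq : IsSeparation (torso G R) q.1 q.2.1 q.2.2) :
    Subtype.val ⁻¹' (liftSep G R q).1 = q.1 ∧ Subtype.val ⁻¹' (liftSep G R q).2.1 = q.2.1 ∧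
      Subtype.val ⁻¹' (liftSep G R q).2.2 = q.2.2 := by
  have hS : Subtype.val ⁻¹' (liftSep G R q).2.1 = q.2.1 :=
    Set.preimage_image_eq _ Subtype.val_injective
  have hZ : Subtype.val ⁻¹' (liftSep G R q).2.2 = q.2.2 := Set.ext fun _ => val_mem_liftFar
  refine ⟨?_, hS, hZ⟩
  rw [hq.eq_compl, ← hS, ← hZ]
  rfl

theorem ncard_liftSep (q : Set R × Set R × Set R) :
    (liftSep G R q).2.1.ncard = q.2.1.ncard :=
  Set.ncard_image_of_injective _ Subtype.val_injective

end Lift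

section TorsoTangle

open SimpleGraph

variable [Finite V] {G : SimpleGraph V} {R : Set V} {T : Set (Set V × Set V × Set V)}

theorem preimage_far_side_nonempty (hR : TriconnectedRegion G R) (hT : IsTangle G 4 T)
    (hTR : ∀ Y S Z, IsSeparation G Y S Z → S.ncard < 3 → R ⊆ S ∪ Z → (Y, S, Z) ∈ T)
    {Y S Z : Set V} (hp : (Y, S, Z) ∈ T) : (Subtype.val ⁻¹' Z : Set R).Nonempty := by
  obtain ⟨p', hp', hsub, hclean⟩ := exists_mem_far_subset_liftFar hR hT hTR hp
  obtain ⟨x, hx⟩ := hT.2.2.2 p' hp'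
  obtain ⟨w, -, hw⟩ := hclean hx
  exact ⟨w, hsub hw⟩

theorem liftSep_mem (hR : TriconnectedRegion G R) (hT : IsTangle G 4 T)
    (hTR : ∀ Y S Z, IsSeparation G Y S Z → S.ncard < 3 → R ⊆ S ∪ Z → (Y, S, Z) ∈ T)
    {q : Set R × Set R × Set R} (hq : IsSeparation (torso G R) q.1 q.2.1 q.2.2)
    (hord : q.2.1.ncard < 4) {Y S Z : Set V} (hp : (Y, S, Z) ∈ T)
    (hZ : Subtype.val ⁻¹' Z ⊆ q.2.2) : liftSep G R q ∈ T := by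
  obtain ⟨p', hp', hsub, hclean⟩ := exists_mem_far_subset_liftFar hR hT hTR hp
  refine hT.mem_of_far_subset hp' (isSeparation_liftSep hq)
    ((ncard_liftSep (G := G) q).symm ▸ hord) fun x hx => ?_
  obtain ⟨w, hwx, hw⟩ := hclean hx
  exact ⟨w, hwx, hZ (hsub hw)⟩

theorem inter_nonempty_or_exists_adj_of_liftSep_mem (hR : TriconnectedRegion G R)
    (hT : IsTangle G 4 T) {q₁ q₂ q₃ : Set R × Set R × Set R} (h₁ : liftSep G R q₁ ∈ T)
    (h₂ : liftSep G R q₂ ∈ T) (h₃ : liftSep G R q₃ ∈ T) :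
    (q₁.2.2 ∩ q₂.2.2 ∩ q₃.2.2).Nonempty ∨
      ∃ u v, (torso G R).Adj u v ∧ (u ∈ q₁.2.2 ∨ v ∈ q₁.2.2) ∧
        (u ∈ q₂.2.2 ∨ v ∈ q₂.2.2) ∧ (u ∈ q₃.2.2 ∨ v ∈ q₃.2.2) := by
  rcases hT.2.2.1 _ h₁ _ h₂ _ h₃ with ⟨x, ⟨hx₁, hx₂⟩, hx₃⟩ | ⟨a, b, hab, ha₁, ha₂, ha₃⟩
  · exact inter_nonempty_or_exists_adj_of_isClique (isClique_shadow x)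
      (ncard_shadow_le_two hR x) hx₁ hx₂ hx₃
  · have hmeet : ∀ {Z' : Set R}, a ∈ liftFar G R Z' ∨ b ∈ liftFar G R Z' →
        ((shadow G R a ∪ shadow G R b) ∩ Z').Nonempty := by
      rintro Z' (⟨w, hwa, hw⟩ | ⟨w, hwb, hw⟩)
      · exact ⟨w, Or.inl hwa, hw⟩
      · exact ⟨w, Or.inr hwb, hw⟩
    exact inter_nonempty_or_exists_adj_of_isClique (isClique_shadow_union hab)
      (ncard_shadow_union_le_two hR hab) (hmeet ha₁) (hmeet ha₂) (hmeet ha₃)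

end TorsoTangle

/-- a tangle of order 4 whose truncation to order 3 is 𝒯³(R) for a
triconnected region R induces a tangle of order 4 of the torso G⟦R⟧. -/
theorem statement8 {V : Type*} [Fintype V] (G : SimpleGraph V) (R : Set V)
    (hR : TriconnectedRegion G R)
    (T : Set (Set V × Set V × Set V)) (hT : IsTangle G 4 T)
    (htrunc : {p : Set V × Set V × Set V | p ∈ T ∧ p.2.1.ncard < 3} =
      {p : Set V × Set V × Set V |
        IsSeparation G p.1 p.2.1 p.2.2 ∧ p.2.1.ncard < 3 ∧ R ⊆ p.2.1 ∪ p.2.2}) :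
    IsTangle (torso G R) 4
      {q : Set ↥R × Set ↥R × Set ↥R |
        IsSeparation (torso G R) q.1 q.2.1 q.2.2 ∧ q.2.1.ncard < 4 ∧
        ∃ p ∈ T, q.1 = {w : ↥R | (w : V) ∈ p.1} ∧
          q.2.1 = {w : ↥R | (w : V) ∈ p.2.1} ∧
          q.2.2 = {w : ↥R | (w : V) ∈ p.2.2}} := by
  have hTR : ∀ Y S Z, IsSeparation G Y S Z → S.ncard < 3 → R ⊆ S ∪ Z → (Y, S, Z) ∈ T :=
    fun Y S Z hsep hS hRSZ => ((Set.ext_iff.1 htrunc (Y, S, Z)).2 ⟨hsep, hS, hRSZ⟩).1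
  refine ⟨fun q hq => ⟨hq.1, hq.2.1⟩, fun Y' S' Z' hq hord => ?_, ?_, ?_⟩
  · obtain ⟨e₁, e₂, e₃⟩ := preimage_liftSep (q := (Y', S', Z')) hq
    rcases hT.2.1 _ _ _ (isSeparation_liftSep (q := (Y', S', Z')) hq)
      ((ncard_liftSep (G := G) (Y', S', Z')).symm ▸ hord) with h | h
    · exact Or.inl ⟨hq, hord, _, h, e₁.symm, e₂.symm, e₃.symm⟩
    · exact Or.inr ⟨hq.symm, hord, _, h, e₃.symm, e₂.symm, e₁.symm⟩
  · rintro q₁ ⟨hq₁, h₁, p₁, hp₁, -, -, e₁⟩ q₂ ⟨hq₂, h₂, p₂, hp₂, -, -, e₂⟩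
      q₃ ⟨hq₃, h₃, p₃, hp₃, -, -, e₃⟩
    exact inter_nonempty_or_exists_adj_of_liftSep_mem hR hT (liftSep_mem hR hT hTR hq₁ h₁ hp₁ e₁.ge)
      (liftSep_mem hR hT hTR hq₂ h₂ hp₂ e₂.ge) (liftSep_mem hR hT hTR hq₃ h₃ hp₃ e₃.ge)
  · rintro q ⟨-, -, ⟨Y, S, Z⟩, hp, -, -, hpq⟩
    exact hpq ▸ preimage_far_side_nonempty hR hT hTR hp
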